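/- arXiv:2411.17975 — 6 statements merged into one kernel-verified Lean document; each statement's English description precedes it below -/
import Mathlib

section
/- The set ↺I^2_7 consists of exactly the seven triples (1,3,5), (1,3,6), (1,4,6), (2,4,6), (2,4,7), (2,5,7), (3,5,7), and there are exactly 51 ordered pairs (𝔛, 𝔜) of subsets of ↺I^2_7 satisfying 𝔛 = nc 𝔜 and 𝔜 = nc 𝔛 (equivalently, there are exactly 51 subsets 𝔛 ⊆ ↺I^2_7 with nc(nc 𝔛) = 𝔛). These pairs correspond to the weak cotorsion pairs in the 4-angulated cluster category of type A_2. -/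
/-- Membership in the index set `↺I^r_m`: an `(r+1)`-tuple `(i_0, …, i_r)` of integers with
`1 ≤ i_0`, `i_r ≤ m`, `i_{x+1} ≥ i_x + 2` for all `0 ≤ x ≤ r-1`, and `i_r + 2 ≤ i_0 + m`. -/
def InCyc (m r : ℕ) (x : Fin (r + 1) → ℤ) : Prop :=
  1 ≤ x 0 ∧ x (Fin.last r) ≤ (m : ℤ) ∧
    (∀ i : Fin r, x i.castSucc + 2 ≤ x i.succ) ∧
    x (Fin.last r) + 2 ≤ x 0 + (m : ℤ)

/-- `X` intertwines `Y`, written `X ≀ Y`: `x_0 < y_0 < x_1 < y_1 < ⋯ < x_r < y_r`. -/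
def Intertwines (r : ℕ) (x y : Fin (r + 1) → ℤ) : Prop :=
  (∀ i, x i < y i) ∧ ∀ i : Fin r, y i.castSucc < x i.succ

/-- `nc 𝔛 = { U ∈ ↺I^r_m : for every V ∈ 𝔛 neither U ≀ V nor V ≀ U }`. -/
def nc (m r : ℕ) (𝔛 : Set (Fin (r + 1) → ℤ)) : Set (Fin (r + 1) → ℤ) :=
  {u | InCyc m r u ∧ ∀ v ∈ 𝔛, ¬ Intertwines r u v ∧ ¬ Intertwines r v u}

/-!
`↺I^2_7` has only seven elements, so the count is a finite computation. An injective
enumeration `e` of `↺I^r_m` by a finite type transports `nc` to an operator on finsets of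
indices, and the kernel counts the 51 fixed points of its square on `Finset (Fin 7)`. An
ordered pair `(𝔛, 𝔜)` is determined by `𝔜`, since `𝔛 = nc 𝔜`, so pairs and `nc`-closed
sets are equinumerous.
-/

open Finset Function

instance (m r : ℕ) : DecidablePred (InCyc m r) := fun _ => by
  unfold InCyc; infer_instance

instance (r : ℕ) : DecidableRel (Intertwines r) := fun _ _ => by
  unfold Intertwines; infer_instance

lemma nc_subset_setOf_inCyc (m r : ℕ) (𝔛 : Set (Fin (r + 1) → ℤ)) :
    nc m r 𝔛 ⊆ {x | InCyc m r x} :=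
  fun _ hu => hu.1

def ncPairs (m r : ℕ) : Set (Set (Fin (r + 1) → ℤ) × Set (Fin (r + 1) → ℤ)) :=
  {p | p.1 ⊆ {x | InCyc m r x} ∧ p.2 ⊆ {x | InCyc m r x} ∧ p.1 = nc m r p.2 ∧ p.2 = nc m r p.1}

def ncClosed (m r : ℕ) : Set (Set (Fin (r + 1) → ℤ)) :=
  {𝔛 | 𝔛 ⊆ {x | InCyc m r x} ∧ nc m r (nc m r 𝔛) = 𝔛}

lemma ncClosed_eq_image_snd_ncPairs (m r : ℕ) : ncClosed m r = Prod.snd '' ncPairs m r := by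
  ext 𝔛
  constructor
  · rintro ⟨hsub, hfix⟩
    exact ⟨(nc m r 𝔛, 𝔛), ⟨nc_subset_setOf_inCyc m r 𝔛, hsub, rfl, hfix.symm⟩, rfl⟩
  · rintro ⟨⟨𝔜, 𝔛⟩, ⟨-, hsub, h𝔜, h𝔛⟩, rfl⟩
    exact ⟨hsub, by rw [← h𝔜, ← h𝔛]⟩

lemma injOn_snd_ncPairs (m r : ℕ) : Set.InjOn Prod.snd (ncPairs m r) := by
  rintro ⟨𝔜, 𝔛⟩ ⟨-, -, h𝔜, -⟩ ⟨𝔜', 𝔛'⟩ ⟨-, -, h𝔜', -⟩ (h𝔛 : 𝔛 = 𝔛')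
  subst h𝔛
  exact Prod.ext (h𝔜.trans h𝔜'.symm) rfl

lemma ncard_ncPairs (m r : ℕ) : (ncPairs m r).ncard = (ncClosed m r).ncard := by
  rw [ncClosed_eq_image_snd_ncPairs, (injOn_snd_ncPairs m r).ncard_image]

section Enumeration

variable {ι : Type*} [Fintype ι] {m r : ℕ} {e : ι → Fin (r + 1) → ℤ}

def ncIndex (r : ℕ) (e : ι → Fin (r + 1) → ℤ) (A : Finset ι) : Finset ι :=
  {i | ∀ j ∈ A, ¬ Intertwines r (e i) (e j) ∧ ¬ Intertwines r (e j) (e i)}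

lemma nc_image_eq_image_ncIndex (he : Set.range e = {x | InCyc m r x}) (A : Finset ι) :
    nc m r (e '' A) = e '' ncIndex r e A := by
  ext u
  constructor
  · rintro ⟨hu, hcompat⟩
    obtain ⟨i, rfl⟩ := he.ge hu
    refine ⟨i, ?_, rfl⟩
    simpa [ncIndex] using fun j hj => hcompat (e j) ⟨j, hj, rfl⟩
  · rintro ⟨i, hi, rfl⟩
    refine ⟨he.le ⟨i, rfl⟩, ?_⟩
    rintro _ ⟨j, hj, rfl⟩
    exact (mem_filter.1 hi).2 j hj

lemma ncClosed_eq_image (he_inj : Injective e) (he : Set.range e = {x | InCyc m r x}) :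
    ncClosed m r =
      (fun A : Finset ι => e '' A) '' {A | ncIndex r e (ncIndex r e A) = A} := by
  ext 𝔛
  constructor
  · rintro ⟨hsub, hfix⟩
    classical
    obtain ⟨A, rfl⟩ : ∃ A : Finset ι, e '' A = 𝔛 :=
      ⟨(e ⁻¹' 𝔛).toFinset, by rw [Set.coe_toFinset, Set.image_preimage_eq_of_subset (he ▸ hsub)]⟩
    refine ⟨A, ?_, rfl⟩
    apply (Set.image_injective.2 he_inj).comp coe_injective
    simp only [comp_apply, ← nc_image_eq_image_ncIndex he, hfix]
  · rintro ⟨A, hA : ncIndex r e (ncIndex r e A) = A, rfl⟩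
    refine ⟨he ▸ Set.image_subset_range e A, ?_⟩
    simp only [nc_image_eq_image_ncIndex he, hA]

lemma ncard_ncClosed [DecidableEq ι] (he_inj : Injective e)
    (he : Set.range e = {x | InCyc m r x}) : (ncClosed m r).ncard = #{A : Finset ι | ncIndex r e (ncIndex r e A) = A} := by
  have himage_inj : Injective fun A : Finset ι => e '' A :=
    (Set.image_injective.2 he_inj).comp coe_injective
  rw [ncClosed_eq_image he_inj he, Set.ncard_image_of_injective _ himage_inj,
    ← Set.ncard_coe_finset]
  simp

end Enumeration

lemma setOf_inCyc_seven_two :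
    {x | InCyc 7 2 x} =
      ({![1,3,5], ![1,3,6], ![1,4,6], ![2,4,6], ![2,4,7], ![2,5,7], ![3,5,7]} :
        Set (Fin 3 → ℤ)) := by
  ext x
  simp only [Set.mem_ofPred_eq, Set.mem_insert_iff, Set.mem_singleton_iff]
  constructor
  · rintro ⟨h0, h2, hstep, hwrap⟩
    have h01 : x 0 + 2 ≤ x 1 := hstep 0
    have h12 : x 1 + 2 ≤ x 2 := hstep 1
    change x 2 ≤ 7 at h2
    change x 2 + 2 ≤ x 0 + 7 at hwrap
    have hx : x = ![x 0, x 1, x 2] := by ext i; fin_cases i <;> rfl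
    rw [hx]
    simp only [Matrix.vecCons_inj, and_true]
    omega
  · rintro (rfl | rfl | rfl | rfl | rfl | rfl | rfl) <;> decide

def cycSevenTwo : Fin 7 → Fin 3 → ℤ :=
  ![![1,3,5], ![1,3,6], ![1,4,6], ![2,4,6], ![2,4,7], ![2,5,7], ![3,5,7]]

lemma cycSevenTwo_injective : Injective cycSevenTwo := by decide

lemma range_cycSevenTwo : Set.range cycSevenTwo = {x | InCyc 7 2 x} := by
  rw [setOf_inCyc_seven_two]
  simp only [cycSevenTwo, Matrix.range_cons, Matrix.range_empty, Set.union_empty, Set.singleton_union]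

lemma ncard_ncClosed_seven_two : (ncClosed 7 2).ncard = 51 := by
  rw [ncard_ncClosed cycSevenTwo_injective range_cycSevenTwo]
  decide +kernel

/-- The set `↺I^2_7` consists of exactly the seven listed triples, and there are exactly 51
ordered pairs `(𝔛, 𝔜)` of subsets of `↺I^2_7` with `𝔛 = nc 𝔜` and `𝔜 = nc 𝔛`
(equivalently, exactly 51 subsets `𝔛 ⊆ ↺I^2_7` with `nc (nc 𝔛) = 𝔛`); these correspond to
the weak cotorsion pairs in the 4-angulated cluster category of type `A_2`. -/
theorem weak_cotorsion_pairs_A2_d2 :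
    {x | InCyc 7 2 x} =
      ({![1,3,5], ![1,3,6], ![1,4,6], ![2,4,6], ![2,4,7], ![2,5,7], ![3,5,7]} :
        Set (Fin 3 → ℤ)) ∧
    Set.ncard {p : Set (Fin 3 → ℤ) × Set (Fin 3 → ℤ) |
        p.1 ⊆ {x | InCyc 7 2 x} ∧ p.2 ⊆ {x | InCyc 7 2 x} ∧
        p.1 = nc 7 2 p.2 ∧ p.2 = nc 7 2 p.1} = 51 ∧
    Set.ncard {𝔛 : Set (Fin 3 → ℤ) |
        𝔛 ⊆ {x | InCyc 7 2 x} ∧ nc 7 2 (nc 7 2 𝔛) = 𝔛} = 51 := by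
  exact ⟨setOf_inCyc_seven_two, (ncard_ncPairs 7 2).trans ncard_ncClosed_seven_two,
    ncard_ncClosed_seven_two⟩
end

section
/- In ↺I^3_9, the subset M = {(1,3,5,7), (1,4,6,8), (2,4,7,9)} satisfies nc M = M; in particular no two elements of M intertwine, and each of the remaining six elements of ↺I^3_9 intertwines (in one order or the other) some element of M. (M corresponds to the maximal 3-rigid object 1357 ⊕ 1468 ⊕ 2479 of the 5-angulated cluster category O_{A_2^3}, which is not cluster tilting; thus (add M, add M) is a weak cotorsion pair but not a cotorsion pair.) -/
/-!
The `i`-th coordinate of an element of `↺I^3_9` is squeezed into `[2i+1, 2i+3]` by the gaps of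
at least `2` and the wrap-around condition, so `↺I^3_9` has exactly nine elements; all claims
are then finite checks.
-/

instance inst_s7 (m r : ℕ) : DecidablePred (InCyc m r) := fun _ => by
  unfold InCyc; infer_instance

instance inst_s7_2 (r : ℕ) : DecidableRel (Intertwines r) := fun _ _ => by
  unfold Intertwines; infer_instance

theorem nc_eq_self_of_maximal {m r : ℕ} {𝔛 : Set (Fin (r + 1) → ℤ)}
    (h𝔛 : ∀ u ∈ 𝔛, InCyc m r u)
    (hpair : ∀ u ∈ 𝔛, ∀ v ∈ 𝔛, ¬ Intertwines r u v)
    (hmax : ∀ u, InCyc m r u → u ∉ 𝔛 → ∃ v ∈ 𝔛, Intertwines r u v ∨ Intertwines r v u) :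
    nc m r 𝔛 = 𝔛 := by
  ext u
  constructor
  · rintro ⟨hu, hnc⟩
    by_contra hu𝔛
    obtain ⟨v, hv, huv | hvu⟩ := hmax u hu hu𝔛
    exacts [(hnc v hv).1 huv, (hnc v hv).2 hvu]
  · intro hu
    exact ⟨h𝔛 u hu, fun v hv => ⟨hpair u hu v hv, hpair v hv u hu⟩⟩

theorem inCyc_nine_three_iff (u : Fin 4 → ℤ) :
    InCyc 9 3 u ↔ u ∈ ({![1,3,5,7], ![1,3,5,8], ![1,3,6,8], ![1,4,6,8], ![2,4,6,8],
      ![2,4,6,9], ![2,4,7,9], ![2,5,7,9], ![3,5,7,9]} : Set (Fin 4 → ℤ)) := by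
  constructor
  · rintro ⟨h0, h3, hstep, hwrap⟩
    obtain ⟨a, b, c, d, rfl⟩ : ∃ a b c d : ℤ, u = ![a, b, c, d] :=
      ⟨u 0, u 1, u 2, u 3, by ext i; fin_cases i <;> rfl⟩
    have hab : a + 2 ≤ b := hstep 0
    have hbc : b + 2 ≤ c := hstep 1
    have hcd : c + 2 ≤ d := hstep 2
    change 1 ≤ a at h0
    change d ≤ 9 at h3
    change d + 2 ≤ a + 9 at hwrap
    have ha : a ≤ 3 := by omega
    have hb : b ≤ 5 := by omega
    have hc : c ≤ 7 := by omega
    interval_cases a <;> interval_cases b <;> interval_cases c <;> interval_cases d <;>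
      first | omega | simp
  · simp only [Set.mem_insert_iff, Set.mem_singleton_iff]
    rintro (rfl | rfl | rfl | rfl | rfl | rfl | rfl | rfl | rfl) <;> decide

local notation "𝓜" => ({![1,3,5,7], ![1,4,6,8], ![2,4,7,9]} : Set (Fin 4 → ℤ))

theorem inCyc_of_mem_M : ∀ u ∈ 𝓜, InCyc 9 3 u := by
  simp only [Set.mem_insert_iff, Set.mem_singleton_iff]
  rintro u (rfl | rfl | rfl) <;> decide

theorem not_intertwines_of_mem_M : ∀ u ∈ 𝓜, ∀ v ∈ 𝓜, ¬ Intertwines 3 u v := by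
  simp only [Set.mem_insert_iff, Set.mem_singleton_iff]
  rintro u (rfl | rfl | rfl) v (rfl | rfl | rfl) <;> decide

theorem exists_intertwines_of_not_mem_M :
    ∀ u, InCyc 9 3 u → u ∉ 𝓜 → ∃ v ∈ 𝓜, Intertwines 3 u v ∨ Intertwines 3 v u := by
  intro u hu
  rw [inCyc_nine_three_iff] at hu
  simp only [Set.mem_insert_iff, Set.mem_singleton_iff, exists_eq_or_imp, exists_eq_left] at hu ⊢
  rcases hu with rfl | rfl | rfl | rfl | rfl | rfl | rfl | rfl | rfl <;> decide

/-- In `↺I^3_9` the subset `M = {1357, 1468, 2479}` satisfies `nc M = M`: no two of its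
elements intertwine, and each of the remaining six elements of `↺I^3_9` intertwines (in one
order or the other) some element of `M`.  `M` corresponds to the maximal 3-rigid object
`1357 ⊕ 1468 ⊕ 2479` of the 5-angulated cluster category `O_{A_2^3}`, which is not cluster
tilting; thus `(add M, add M)` is a weak cotorsion pair but not a cotorsion pair. -/
theorem maximal_rigid_M_A2_d3 :
    nc 9 3 ({![1,3,5,7], ![1,4,6,8], ![2,4,7,9]} : Set (Fin 4 → ℤ)) =
      ({![1,3,5,7], ![1,4,6,8], ![2,4,7,9]} : Set (Fin 4 → ℤ)) ∧
    (∀ u ∈ ({![1,3,5,7], ![1,4,6,8], ![2,4,7,9]} : Set (Fin 4 → ℤ)),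
      ∀ v ∈ ({![1,3,5,7], ![1,4,6,8], ![2,4,7,9]} : Set (Fin 4 → ℤ)),
        ¬ Intertwines 3 u v) ∧
    (∀ u : Fin 4 → ℤ, InCyc 9 3 u →
      u ∉ ({![1,3,5,7], ![1,4,6,8], ![2,4,7,9]} : Set (Fin 4 → ℤ)) →
      ∃ v ∈ ({![1,3,5,7], ![1,4,6,8], ![2,4,7,9]} : Set (Fin 4 → ℤ)),
        Intertwines 3 u v ∨ Intertwines 3 v u) :=
  ⟨nc_eq_self_of_maximal inCyc_of_mem_M not_intertwines_of_mem_M exists_intertwines_of_not_mem_M,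
    not_intertwines_of_mem_M, exists_intertwines_of_not_mem_M⟩
end

section
/- Let 𝒟 be a strongly functorially finite rigid subcategory of a pretriangulated category C satisfying ^⊥(Σ𝒟) = (Σ⁻¹𝒟)^⊥, and denote this common class by 𝒵. Then (𝒵, 𝒵) is a 𝒟-mutation pair: (a) for every Z ∈ 𝒵 there exists a distinguished triangle Z →f D →g A → ΣZ with D ∈ 𝒟, A ∈ 𝒵, f a left 𝒟-approximation of Z and g a right 𝒟-approximation of A; (b) for every Z ∈ 𝒵 there exists a distinguished triangle B →f′ D′ →g′ Z → ΣB with B ∈ 𝒵, D′ ∈ 𝒟, f′ a left 𝒟-approximation of B and g′ a right 𝒟-approximation of Z. -/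
/-!
Everything follows from the long exact `Hom`-sequences of the approximation triangles.
For `Z → D → A → ΣZ` with `Z → D` a left `𝒟`-approximation, a map `A → ΣD₁` dies on `D` by
rigidity, so it factors through `ΣZ → ΣD`, where it vanishes; and `D → A` is a right
approximation because `Hom(𝒟, ΣZ) = 0`. The triangle `B → D′ → Z → ΣB` is treated dually,
with `Hom(Σ⁻¹Z, 𝒟) = 0`. The hypothesis `^⊥(Σ𝒟) = (Σ⁻¹𝒟)^⊥` is what lets `Z` serve on both
sides, and the adjunction `Σ⁻¹ ⊣ Σ` translates between the two forms of orthogonality.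
-/

open CategoryTheory Limits Pretriangulated

universe v u

variable {C : Type u} [Category.{v} C] [HasZeroObject C] [HasShift C ℤ] [Preadditive C]
  [∀ n : ℤ, (shiftFunctor C n).Additive] [Pretriangulated C] [HasBinaryBiproducts C]

/-- A (full) subcategory, identified with its class of objects: closed under isomorphisms,
finite direct sums and direct summands. -/
def IsSubcat (S : Set C) : Prop :=
  (∀ ⦃X Y : C⦄, (X ≅ Y) → X ∈ S → Y ∈ S) ∧
  (∀ ⦃X Y : C⦄, X ∈ S → Y ∈ S → (X ⊞ Y) ∈ S) ∧
  (∀ ⦃X Y : C⦄, (X ⊞ Y) ∈ S → X ∈ S ∧ Y ∈ S)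

/-- `g : X ⟶ Z` is a right `S`-approximation of `Z`. -/
def IsRightApprox (S : Set C) {X Z : C} (g : X ⟶ Z) : Prop :=
  X ∈ S ∧ ∀ ⦃X' : C⦄, X' ∈ S → ∀ u : X' ⟶ Z, ∃ t : X' ⟶ X, t ≫ g = u

/-- `f : Z ⟶ X` is a left `S`-approximation of `Z`. -/
def IsLeftApprox (S : Set C) {Z X : C} (f : Z ⟶ X) : Prop :=
  X ∈ S ∧ ∀ ⦃X' : C⦄, X' ∈ S → ∀ u : Z ⟶ X', ∃ t : X ⟶ X', f ≫ t = u

/-- `S` is contravariantly finite: every object admits a right `S`-approximation. -/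
def ContravariantlyFinite (S : Set C) : Prop :=
  ∀ Z : C, ∃ (X : C) (g : X ⟶ Z), IsRightApprox S g

/-- `S` is covariantly finite: every object admits a left `S`-approximation. -/
def CovariantlyFinite (S : Set C) : Prop :=
  ∀ Z : C, ∃ (X : C) (f : Z ⟶ X), IsLeftApprox S f

/-- `(𝒳, 𝒴)` is a cotorsion pair: `Hom(𝒳, Σ𝒴) = 0` and every object `Z` admits distinguished
triangles `Σ⁻¹X → Z → Y → X` and `Y′ → X′ → Z → ΣY′` with `X, X′ ∈ 𝒳` and `Y, Y′ ∈ 𝒴`. -/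
def IsCotorsionPair (𝒳 𝒴 : Set C) : Prop :=
  (∀ ⦃A B : C⦄, A ∈ 𝒳 → B ∈ 𝒴 → ∀ f : A ⟶ B⟦(1 : ℤ)⟧, f = 0) ∧
  (∀ Z : C, ∃ (A B : C) (f : A⟦(-1 : ℤ)⟧ ⟶ Z) (g : Z ⟶ B) (h : B ⟶ A⟦(-1 : ℤ)⟧⟦(1 : ℤ)⟧),
      A ∈ 𝒳 ∧ B ∈ 𝒴 ∧ Triangle.mk f g h ∈ distTriang C) ∧
  (∀ Z : C, ∃ (A B : C) (f : B ⟶ A) (g : A ⟶ Z) (h : Z ⟶ B⟦(1 : ℤ)⟧),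
      A ∈ 𝒳 ∧ B ∈ 𝒴 ∧ Triangle.mk f g h ∈ distTriang C)
/-- `𝒟` is rigid: `Hom(𝒟, Σ𝒟) = 0`. -/
def IsRigid (𝒟 : Set C) : Prop :=
  ∀ ⦃D D' : C⦄, D ∈ 𝒟 → D' ∈ 𝒟 → ∀ f : D ⟶ D'⟦(1 : ℤ)⟧, f = 0

/-- `𝒟` is strongly functorially finite: every object `Z` admits distinguished triangles
`Z →f D → A → ΣZ` with `D ∈ 𝒟` and `f` a left `𝒟`-approximation, and
`B → D′ →g Z → ΣB` with `D′ ∈ 𝒟` and `g` a right `𝒟`-approximation. -/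
def StronglyFunctoriallyFinite (𝒟 : Set C) : Prop :=
  (∀ Z : C, ∃ (D A : C) (f : Z ⟶ D) (g : D ⟶ A) (h : A ⟶ Z⟦(1 : ℤ)⟧),
      D ∈ 𝒟 ∧ (Triangle.mk f g h ∈ distTriang C) ∧ IsLeftApprox 𝒟 f) ∧
  (∀ Z : C, ∃ (B D : C) (f : B ⟶ D) (g : D ⟶ Z) (h : Z ⟶ B⟦(1 : ℤ)⟧),
      D ∈ 𝒟 ∧ (Triangle.mk f g h ∈ distTriang C) ∧ IsRightApprox 𝒟 g)

/-- The left perpendicular class `^⊥(Σ𝒟)`. -/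
def leftPerpShift (𝒟 : Set C) : Set C :=
  {Z : C | ∀ D ∈ 𝒟, ∀ f : Z ⟶ D⟦(1 : ℤ)⟧, f = 0}

/-- The right perpendicular class `(Σ⁻¹𝒟)^⊥`. -/
def rightPerpShift (𝒟 : Set C) : Set C :=
  {Z : C | ∀ D ∈ 𝒟, ∀ f : D⟦(-1 : ℤ)⟧ ⟶ Z, f = 0}

section Shift

omit [HasZeroObject C] [Pretriangulated C] [HasBinaryBiproducts C]

lemma forall_hom_shift_neg_one_eq_zero_iff {X Y : C} :
    (∀ f : X⟦(-1 : ℤ)⟧ ⟶ Y, f = 0) ↔ ∀ f : X ⟶ Y⟦(1 : ℤ)⟧, f = 0 := by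
  let E := shiftEquiv' C (-1 : ℤ) 1 (by norm_num)
  have : E.functor.Additive := inferInstanceAs (shiftFunctor C (-1 : ℤ)).Additive
  let e := E.toAdjunction.homAddEquiv X Y
  exact ⟨fun h f => e.symm.injective ((h _).trans (map_zero e.symm).symm),
    fun h f => e.injective ((h _).trans (map_zero e).symm)⟩

lemma mem_leftPerpShift_iff {𝒟 : Set C} {Z : C} :
    Z ∈ leftPerpShift 𝒟 ↔ ∀ D ∈ 𝒟, ∀ f : Z⟦(-1 : ℤ)⟧ ⟶ D, f = 0 :=
  forall₂_congr fun _ _ => forall_hom_shift_neg_one_eq_zero_iff.symm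

lemma mem_rightPerpShift_iff {𝒟 : Set C} {Z : C} :
    Z ∈ rightPerpShift 𝒟 ↔ ∀ D ∈ 𝒟, ∀ f : D ⟶ Z⟦(1 : ℤ)⟧, f = 0 :=
  forall₂_congr fun _ _ => forall_hom_shift_neg_one_eq_zero_iff

end Shift

section Triangle

omit [HasBinaryBiproducts C]

variable {𝒟 : Set C}

lemma mem_leftPerpShift_of_isLeftApprox (hrig : IsRigid 𝒟) {Z D A : C} {f : Z ⟶ D}
    {g : D ⟶ A} {h : A ⟶ Z⟦(1 : ℤ)⟧} (hT : Triangle.mk f g h ∈ distTriang C)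
    (hf : IsLeftApprox 𝒟 f) : A ∈ leftPerpShift 𝒟 := by
  intro D₁ hD₁ u
  obtain ⟨v, rfl⟩ := Triangle.yoneda_exact₃ _ hT u (hrig hf.1 hD₁ (g ≫ u))
  obtain ⟨w, rfl⟩ := (shiftFunctor C (1 : ℤ)).map_surjective v
  obtain ⟨t, rfl⟩ := hf.2 hD₁ w
  have hfh : h ≫ f⟦(1 : ℤ)⟧' = 0 := comp_distTriang_mor_zero₃₁ _ hT
  change h ≫ (f ≫ t)⟦(1 : ℤ)⟧' = 0
  rw [Functor.map_comp, reassoc_of% hfh, zero_comp]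

lemma isRightApprox_of_mem_rightPerpShift {Z D A : C} {f : Z ⟶ D} {g : D ⟶ A}
    {h : A ⟶ Z⟦(1 : ℤ)⟧} (hT : Triangle.mk f g h ∈ distTriang C) (hD : D ∈ 𝒟)
    (hZ : Z ∈ rightPerpShift 𝒟) : IsRightApprox 𝒟 g := by
  refine ⟨hD, fun D' hD' u => ?_⟩
  obtain ⟨t, ht⟩ := Triangle.coyoneda_exact₃ _ hT u (mem_rightPerpShift_iff.1 hZ D' hD' _)
  exact ⟨t, ht.symm⟩

lemma mem_rightPerpShift_of_isRightApprox (hrig : IsRigid 𝒟) {B D Z : C} {f : B ⟶ D}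
    {g : D ⟶ Z} {h : Z ⟶ B⟦(1 : ℤ)⟧} (hT : Triangle.mk f g h ∈ distTriang C)
    (hg : IsRightApprox 𝒟 g) : B ∈ rightPerpShift 𝒟 := by
  refine mem_rightPerpShift_iff.2 fun D₀ hD₀ u => ?_
  obtain ⟨t, rfl⟩ := Triangle.coyoneda_exact₁ _ hT u (hrig hD₀ hg.1 _)
  obtain ⟨s, rfl⟩ := hg.2 hD₀ t
  have hgh : g ≫ h = 0 := comp_distTriang_mor_zero₂₃ _ hT
  change (s ≫ g) ≫ h = 0
  rw [Category.assoc, hgh, comp_zero]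

lemma isLeftApprox_of_mem_leftPerpShift {B D Z : C} {f : B ⟶ D} {g : D ⟶ Z}
    {h : Z ⟶ B⟦(1 : ℤ)⟧} (hT : Triangle.mk f g h ∈ distTriang C) (hD : D ∈ 𝒟)
    (hZ : Z ∈ leftPerpShift 𝒟) : IsLeftApprox 𝒟 f := by
  refine ⟨hD, fun D₁ hD₁ u => ?_⟩
  obtain ⟨t, ht⟩ := Triangle.yoneda_exact₂ _ (inv_rot_of_distTriang _ hT) u
    (mem_leftPerpShift_iff.1 hZ D₁ hD₁ _)
  exact ⟨t, ht.symm⟩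

end Triangle

theorem mutation_pair_of_rigid_general (𝒟 : Set C) (hrig : IsRigid 𝒟)
    (hff : StronglyFunctoriallyFinite 𝒟)
    (hperp : leftPerpShift 𝒟 = rightPerpShift 𝒟) :
    (∀ Z ∈ leftPerpShift 𝒟,
      ∃ (D A : C) (f : Z ⟶ D) (g : D ⟶ A) (h : A ⟶ Z⟦(1 : ℤ)⟧),
        D ∈ 𝒟 ∧ A ∈ leftPerpShift 𝒟 ∧ (Triangle.mk f g h ∈ distTriang C) ∧
          IsLeftApprox 𝒟 f ∧ IsRightApprox 𝒟 g) ∧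
    (∀ Z ∈ leftPerpShift 𝒟,
      ∃ (B D : C) (f : B ⟶ D) (g : D ⟶ Z) (h : Z ⟶ B⟦(1 : ℤ)⟧),
        B ∈ leftPerpShift 𝒟 ∧ D ∈ 𝒟 ∧ (Triangle.mk f g h ∈ distTriang C) ∧
          IsLeftApprox 𝒟 f ∧ IsRightApprox 𝒟 g) := by
  refine ⟨fun Z hZ => ?_, fun Z hZ => ?_⟩
  · obtain ⟨D, A, f, g, h, hD, hT, hf⟩ := hff.1 Z
    exact ⟨D, A, f, g, h, hD, mem_leftPerpShift_of_isLeftApprox hrig hT hf, hT, hf,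
      isRightApprox_of_mem_rightPerpShift hT hD (hperp ▸ hZ)⟩
  · obtain ⟨B, D, f, g, h, hD, hT, hg⟩ := hff.2 Z
    exact ⟨B, D, f, g, h, hperp ▸ mem_rightPerpShift_of_isRightApprox hrig hT hg, hD, hT,
      isLeftApprox_of_mem_leftPerpShift hT hD hZ, hg⟩

/-- Lemma 4.8 for `d = 1`: if `𝒟` is a strongly functorially finite rigid subcategory with
`^⊥(Σ𝒟) = (Σ⁻¹𝒟)^⊥ =: 𝒵`, then `(𝒵, 𝒵)` is a `𝒟`-mutation pair. -/
theorem mutation_pair_of_rigid (𝒟 : Set C) (hsub : IsSubcat 𝒟) (hrig : IsRigid 𝒟)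
    (hff : StronglyFunctoriallyFinite 𝒟)
    (hperp : leftPerpShift 𝒟 = rightPerpShift 𝒟) :
    (∀ Z ∈ leftPerpShift 𝒟,
      ∃ (D A : C) (f : Z ⟶ D) (g : D ⟶ A) (h : A ⟶ Z⟦(1 : ℤ)⟧),
        D ∈ 𝒟 ∧ A ∈ leftPerpShift 𝒟 ∧ (Triangle.mk f g h ∈ distTriang C) ∧
          IsLeftApprox 𝒟 f ∧ IsRightApprox 𝒟 g) ∧
    (∀ Z ∈ leftPerpShift 𝒟,
      ∃ (B D : C) (f : B ⟶ D) (g : D ⟶ Z) (h : Z ⟶ B⟦(1 : ℤ)⟧),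
        B ∈ leftPerpShift 𝒟 ∧ D ∈ 𝒟 ∧ (Triangle.mk f g h ∈ distTriang C) ∧
          IsLeftApprox 𝒟 f ∧ IsRightApprox 𝒟 g) :=
  mutation_pair_of_rigid_general 𝒟 hrig hff hperp
end

section
/- Let 𝒟 be a rigid subcategory of a pretriangulated category C (Hom(𝒟, Σ𝒟) = 0), let X be an object with Hom_C(X, ΣD) = 0 for all D ∈ 𝒟, and let Y →f D →g T →h ΣY be a distinguished triangle with D ∈ 𝒟 such that g is a right 𝒟-approximation of T. Then the map Hom_C(X, T) → Hom_C(X, ΣY) given by φ ↦ h ∘ φ is surjective, and its kernel is exactly the subgroup [𝒟](X, T) of morphisms X → T that factor through some object of 𝒟. Consequently Hom_C(X, T)/[𝒟](X, T) ≅ Hom_C(X, ΣY) as abelian groups. -/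
/-! The kernel of `φ ↦ φ ≫ h` is the set of morphisms factoring through `g` (exactness of
`Hom(X, -)` on the triangle), and since `g` is a right `𝒟`-approximation these are exactly the
morphisms factoring through `𝒟`. Surjectivity is exactness at `Hom(X, ΣY)`: the obstruction
lives in `Hom(X, ΣD)`, which vanishes. -/

open CategoryTheory Limits Pretriangulated

universe v u

variable {C : Type u} [Category.{v} C] [HasZeroObject C] [HasShift C ℤ] [Preadditive C]
  [∀ n : ℤ, (shiftFunctor C n).Additive] [Pretriangulated C] [HasBinaryBiproducts C]

section Triangle

variable {𝒞 : Type*} [Category 𝒞] [Preadditive 𝒞] [HasZeroObject 𝒞] [HasShift 𝒞 ℤ]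
  [∀ n : ℤ, (shiftFunctor 𝒞 n).Additive] [Pretriangulated 𝒞]

lemma CategoryTheory.Pretriangulated.comp_distTriang_mor₃_eq_zero_iff (T : Triangle 𝒞)
    (hT : T ∈ distTriang 𝒞) {X : 𝒞} (φ : X ⟶ T.obj₃) :
    φ ≫ T.mor₃ = 0 ↔ ∃ a : X ⟶ T.obj₂, a ≫ T.mor₂ = φ := by
  constructor
  · intro hφ
    obtain ⟨a, rfl⟩ := T.coyoneda_exact₃ hT φ hφ
    exact ⟨a, rfl⟩
  · rintro ⟨a, rfl⟩
    rw [Category.assoc, comp_distTriang_mor_zero₂₃ T hT, comp_zero]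

lemma CategoryTheory.Pretriangulated.comp_distTriang_mor₃_surjective
    (T : Triangle 𝒞) (hT : T ∈ distTriang 𝒞) {X : 𝒞}
    (hX : ∀ u : X ⟶ T.obj₂⟦(1 : ℤ)⟧, u = 0) :
    Function.Surjective (fun φ : X ⟶ T.obj₃ => φ ≫ T.mor₃) := fun ψ =>
  let ⟨φ, hφ⟩ := T.coyoneda_exact₁ hT ψ (hX _)
  ⟨φ, hφ.symm⟩

end Triangle

section Approximation

variable {𝒞 : Type*} [Category 𝒞]

/-- `φ` lies in the ideal `[S](X, T)`. -/
def FactorsThroughSet (S : Set 𝒞) {X T : 𝒞} (φ : X ⟶ T) : Prop :=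
  ∃ D ∈ S, ∃ (a : X ⟶ D) (b : D ⟶ T), a ≫ b = φ

lemma IsRightApprox.factorsThroughSet_iff {S : Set 𝒞} {D T : 𝒞} {g : D ⟶ T}
    (hg : IsRightApprox S g) {X : 𝒞} (φ : X ⟶ T) :
    FactorsThroughSet S φ ↔ ∃ a : X ⟶ D, a ≫ g = φ := by
  constructor
  · rintro ⟨D', hD', a, b, rfl⟩
    obtain ⟨t, rfl⟩ := hg.2 hD' b
    exact ⟨a ≫ t, Category.assoc _ _ _⟩
  · rintro ⟨a, rfl⟩
    exact ⟨D, hg.1, a, g, rfl⟩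

end Approximation

theorem hom_quotient_iso_hom_shift_general (𝒟 : Set C)
    (X : C) (hX : ∀ D ∈ 𝒟, ∀ f : X ⟶ D⟦(1 : ℤ)⟧, f = 0)
    (Y D T : C) (f : Y ⟶ D) (g : D ⟶ T) (h : T ⟶ Y⟦(1 : ℤ)⟧)
    (hD : D ∈ 𝒟) (htri : Triangle.mk f g h ∈ distTriang C)
    (hg : IsRightApprox 𝒟 g) :
    Function.Surjective (fun φ : X ⟶ T => φ ≫ h) ∧
      ∀ φ : X ⟶ T, φ ≫ h = 0 ↔
        ∃ (D' : C), D' ∈ 𝒟 ∧ ∃ (a : X ⟶ D') (b : D' ⟶ T), a ≫ b = φ := by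
  refine ⟨comp_distTriang_mor₃_surjective _ htri (hX D hD), fun φ => ?_⟩
  exact (comp_distTriang_mor₃_eq_zero_iff _ htri φ).trans (hg.factorsThroughSet_iff φ).symm

/-- Lemma 4.9(2) for `d = 1`: let `𝒟` be a rigid subcategory, `X` an object with
`Hom(X, Σ𝒟) = 0`, and `Y →f D →g T →h ΣY` a distinguished triangle with `D ∈ 𝒟` and `g`
a right `𝒟`-approximation of `T`.  Then `φ ↦ φ ≫ h : Hom(X, T) → Hom(X, ΣY)` is surjective
with kernel exactly `[𝒟](X, T)`, the morphisms factoring through an object of `𝒟`;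
consequently `Hom(X, T)/[𝒟](X, T) ≅ Hom(X, ΣY)`. -/
theorem hom_quotient_iso_hom_shift (𝒟 : Set C) (hsub : IsSubcat 𝒟) (hrig : IsRigid 𝒟)
    (X : C) (hX : ∀ D ∈ 𝒟, ∀ f : X ⟶ D⟦(1 : ℤ)⟧, f = 0)
    (Y D T : C) (f : Y ⟶ D) (g : D ⟶ T) (h : T ⟶ Y⟦(1 : ℤ)⟧)
    (hD : D ∈ 𝒟) (htri : Triangle.mk f g h ∈ distTriang C)
    (hg : IsRightApprox 𝒟 g) :
    Function.Surjective (fun φ : X ⟶ T => φ ≫ h) ∧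
      ∀ φ : X ⟶ T, φ ≫ h = 0 ↔
        ∃ (D' : C), D' ∈ 𝒟 ∧ ∃ (a : X ⟶ D') (b : D' ⟶ T), a ≫ b = φ :=
  hom_quotient_iso_hom_shift_general 𝒟 X hX Y D T f g h hD htri hg
end

section
/- Let C be a pretriangulated category, 𝒟 a subcategory with ^⊥(Σ𝒟) = (Σ⁻¹𝒟)^⊥, and set 𝒵 = ^⊥(Σ𝒟). Let (𝒳, 𝒴) be a cotorsion pair in C with core ℐ = 𝒳 ∩ 𝒴. Then 𝒟 ⊆ ℐ if and only if 𝒟 ⊆ 𝒳 ⊆ 𝒵 and 𝒟 ⊆ 𝒴 ⊆ 𝒵. -/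
open CategoryTheory Limits Pretriangulated

universe v u

variable {C : Type u} [Category.{v} C] [HasZeroObject C] [HasShift C ℤ] [Preadditive C]
  [∀ n : ℤ, (shiftFunctor C n).Additive] [Pretriangulated C] [HasBinaryBiproducts C]

theorem eq_zero_of_forall_hom_to_shift_eq_zero {𝒞 : Type*} [Category 𝒞] [HasZeroMorphisms 𝒞]
    [HasShift 𝒞 ℤ] [(shiftFunctor 𝒞 (-1 : ℤ)).PreservesZeroMorphisms] {A B : 𝒞}
    (h : ∀ g : A ⟶ B⟦(1 : ℤ)⟧, g = 0) (f : A⟦(-1 : ℤ)⟧ ⟶ B) : f = 0 := by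
  let adj := (shiftEquiv' 𝒞 (-1 : ℤ) 1 (by norm_num)).toAdjunction
  have hf : adj.homEquiv A B f = 0 := h _
  rw [← (adj.homEquiv A B).symm_apply_apply f, hf, adj.homEquiv_counit, Functor.map_zero]
  exact zero_comp

section

variable {𝒞 : Type*} [Category 𝒞] [HasZeroObject 𝒞] [HasShift 𝒞 ℤ] [Preadditive 𝒞]
  [∀ n : ℤ, (shiftFunctor 𝒞 n).Additive] [Pretriangulated 𝒞] {𝒳 𝒴 𝒟 : Set 𝒞}

theorem IsCotorsionPair.subset_leftPerpShift (hct : IsCotorsionPair 𝒳 𝒴) (h𝒟 : 𝒟 ⊆ 𝒴) :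
    𝒳 ⊆ leftPerpShift 𝒟 :=
  fun _ hX _ hD f => hct.1 hX (h𝒟 hD) f

theorem IsCotorsionPair.subset_rightPerpShift (hct : IsCotorsionPair 𝒳 𝒴) (h𝒟 : 𝒟 ⊆ 𝒳) :
    𝒴 ⊆ rightPerpShift 𝒟 :=
  fun _ hY _ hD => eq_zero_of_forall_hom_to_shift_eq_zero (hct.1 (h𝒟 hD) hY)

end

theorem core_contains_iff_general (𝒟 𝒳 𝒴 : Set C)
    (hperp : leftPerpShift 𝒟 = rightPerpShift 𝒟)
    (hct : IsCotorsionPair 𝒳 𝒴) :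
    𝒟 ⊆ 𝒳 ∩ 𝒴 ↔
      (𝒟 ⊆ 𝒳 ∧ 𝒳 ⊆ leftPerpShift 𝒟) ∧ (𝒟 ⊆ 𝒴 ∧ 𝒴 ⊆ leftPerpShift 𝒟) := by
  rw [Set.subset_inter_iff]
  constructor
  · rintro ⟨h𝒟𝒳, h𝒟𝒴⟩
    exact ⟨⟨h𝒟𝒳, hct.subset_leftPerpShift h𝒟𝒴⟩, h𝒟𝒴, hperp ▸ hct.subset_rightPerpShift h𝒟𝒳⟩
  · rintro ⟨⟨h𝒟𝒳, -⟩, h𝒟𝒴, -⟩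
    exact ⟨h𝒟𝒳, h𝒟𝒴⟩

/-- Lemma 4.10 for `d = 1`: let `𝒟` be a subcategory with `^⊥(Σ𝒟) = (Σ⁻¹𝒟)^⊥ =: 𝒵`,
and `(𝒳, 𝒴)` a cotorsion pair with core `ℐ = 𝒳 ∩ 𝒴`.  Then `𝒟 ⊆ ℐ` if and only if
`𝒟 ⊆ 𝒳 ⊆ 𝒵` and `𝒟 ⊆ 𝒴 ⊆ 𝒵`. -/
theorem core_contains_iff (𝒟 𝒳 𝒴 : Set C)
    (h𝒟 : IsSubcat 𝒟) (h𝒳 : IsSubcat 𝒳) (h𝒴 : IsSubcat 𝒴)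
    (hperp : leftPerpShift 𝒟 = rightPerpShift 𝒟)
    (hct : IsCotorsionPair 𝒳 𝒴) :
    𝒟 ⊆ 𝒳 ∩ 𝒴 ↔
      (𝒟 ⊆ 𝒳 ∧ 𝒳 ⊆ leftPerpShift 𝒟) ∧ (𝒟 ⊆ 𝒴 ∧ 𝒴 ⊆ leftPerpShift 𝒟) :=
  core_contains_iff_general 𝒟 𝒳 𝒴 hperp hct
end

section
/- Let 𝒟 be a strongly functorially finite rigid subcategory of a pretriangulated category C satisfying ^⊥(Σ𝒟) = (Σ⁻¹𝒟)^⊥, denote this common class by 𝒵, and assume 𝒵 is extension closed. Then forward and backward 𝒟-mutation are mutually inverse operations on subcategories ℳ of C with 𝒟 ⊆ ℳ ⊆ 𝒵: for every such ℳ one has μ_𝒟(μ_𝒟⁻¹(ℳ)) = ℳ and μ_𝒟⁻¹(μ_𝒟(ℳ)) = ℳ. -/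
open CategoryTheory Limits Pretriangulated

universe v u

variable {C : Type u} [Category.{v} C] [HasZeroObject C] [HasShift C ℤ] [Preadditive C]
  [∀ n : ℤ, (shiftFunctor C n).Additive] [Pretriangulated C] [HasBinaryBiproducts C]

/-- `𝒵` is extension closed: every morphism `w : X₂ ⟶ ΣX₁` with `X₁, X₂ ∈ 𝒵` fits in a
distinguished triangle `X₁ → X → X₂ →w ΣX₁` with `X ∈ 𝒵`. -/
def ExtClosed (𝒵 : Set C) : Prop :=
  ∀ ⦃X₁ X₂ : C⦄, X₁ ∈ 𝒵 → X₂ ∈ 𝒵 → ∀ w : X₂ ⟶ X₁⟦(1 : ℤ)⟧,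
    ∃ (X : C) (f : X₁ ⟶ X) (g : X ⟶ X₂), X ∈ 𝒵 ∧ Triangle.mk f g w ∈ distTriang C

/-- The forward `𝒟`-mutation `μ_𝒟⁻¹(ℳ)`: objects of `𝒟` together with all `A` fitting in a
distinguished triangle `M →f D →g A → ΣM` with `M ∈ ℳ`, `D ∈ 𝒟`, `f` a left
`𝒟`-approximation and `g` a right `𝒟`-approximation. -/
def forwardMut (𝒟 ℳ : Set C) : Set C :=
  𝒟 ∪ {A : C | ∃ (M D : C) (f : M ⟶ D) (g : D ⟶ A) (h : A ⟶ M⟦(1 : ℤ)⟧),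
      M ∈ ℳ ∧ D ∈ 𝒟 ∧ (Triangle.mk f g h ∈ distTriang C) ∧
        IsLeftApprox 𝒟 f ∧ IsRightApprox 𝒟 g}

/-- The backward `𝒟`-mutation `μ_𝒟(ℳ)`: objects of `𝒟` together with all `B` fitting in a
distinguished triangle `B →f D →g M → ΣB` with `M ∈ ℳ`, `D ∈ 𝒟`, `f` a left
`𝒟`-approximation and `g` a right `𝒟`-approximation. -/
def backwardMut (𝒟 ℳ : Set C) : Set C :=
  𝒟 ∪ {B : C | ∃ (D M : C) (f : B ⟶ D) (g : D ⟶ M) (h : M ⟶ B⟦(1 : ℤ)⟧),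
      M ∈ ℳ ∧ D ∈ 𝒟 ∧ (Triangle.mk f g h ∈ distTriang C) ∧
        IsLeftApprox 𝒟 f ∧ IsRightApprox 𝒟 g}


/-!
The key fact is a Schanuel lemma for triangles: if `X → Y →g Z` and `X' → Y' →g' Z` are
distinguished and `g`, `g'` factor through each other, then `X ⊞ Y' ≅ X' ⊞ Y`. For
`B ∈ μ_𝒟(μ_𝒟⁻¹ ℳ)` the object `A` of its triangle `B → D → A` also sits in a triangle
`M → D' → A` with `M ∈ ℳ`, and both `D → A`, `D' → A` are right `𝒟`-approximations, so
`B ⊞ D' ≅ M ⊞ D ∈ ℳ`. Conversely, for `M ∈ ℳ` the triangle `M → D → A` of a left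
`𝒟`-approximation has `D → A` a right `𝒟`-approximation because `Hom(𝒟, ΣM) = 0`, so `M`
comes back. The other composite is dual.
-/

section

omit [HasBinaryBiproducts C]

lemma nonempty_iso_of_distinguished_of_mor₂ {X Y Z X' Y' : C} {f : X ⟶ Y} {g : Y ⟶ Z}
    {h : Z ⟶ X⟦(1 : ℤ)⟧} {f' : X' ⟶ Y'} {g' : Y' ⟶ Z} {h' : Z ⟶ X'⟦(1 : ℤ)⟧}
    (hT : Triangle.mk f g h ∈ distTriang C) (hT' : Triangle.mk f' g' h' ∈ distTriang C)
    (e : Y ≅ Y') (he : e.hom ≫ g' = g) : Nonempty (X ≅ X') :=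
  ⟨(shiftFunctor C (1 : ℤ)).preimageIso <| Triangle.π₃.mapIso <|
    isoTriangleOfIso₁₂ _ _ (rot_of_distTriang _ hT) (rot_of_distTriang _ hT') e (Iso.refl Z)
      (by dsimp only [Triangle.rotate, Triangle.mk]; simp [he])⟩

omit [HasZeroObject C] [Pretriangulated C] in
lemma eq_zero_of_mem_rightPerpShift {𝒟 : Set C} {X D : C} (hX : X ∈ rightPerpShift 𝒟)
    (hD : D ∈ 𝒟) (u : D ⟶ X⟦(1 : ℤ)⟧) : u = 0 := by
  apply (shiftFunctor C (-1 : ℤ)).map_injective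
  rw [Functor.map_zero,
    ← cancel_mono ((shiftFunctorCompIsoId C (1 : ℤ) (-1) (by norm_num)).hom.app X), zero_comp]
  exact hX D hD _

lemma isLeftApprox_of_distinguished {𝒟 : Set C} {X D A : C} {f : X ⟶ D} {g : D ⟶ A}
    {h : A ⟶ X⟦(1 : ℤ)⟧} (hT : Triangle.mk f g h ∈ distTriang C) (hD : D ∈ 𝒟)
    (hA : A ∈ leftPerpShift 𝒟) : IsLeftApprox 𝒟 f := by
  refine ⟨hD, fun D' hD' u => ?_⟩
  obtain ⟨t, ht, -⟩ := complete_distinguished_triangle_morphism₂ _ _ hT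
    (contractible_distinguished D') u 0 (by rw [zero_comp]; exact hA D' hD' _)
  exact ⟨t, ht.trans (Category.comp_id u)⟩

lemma isRightApprox_of_distinguished {𝒟 : Set C} {X D A : C} {f : X ⟶ D} {g : D ⟶ A}
    {h : A ⟶ X⟦(1 : ℤ)⟧} (hT : Triangle.mk f g h ∈ distTriang C) (hD : D ∈ 𝒟)
    (hX : X ∈ rightPerpShift 𝒟) : IsRightApprox 𝒟 g := by
  refine ⟨hD, fun D' hD' u => ?_⟩
  obtain ⟨t, ht⟩ := Triangle.coyoneda_exact₃ _ hT u (eq_zero_of_mem_rightPerpShift hX hD' _)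
  exact ⟨t, ht.symm⟩

lemma mor₃_eq_zero_of_isRightApprox {𝒟 : Set C} {X D A : C} {f : X ⟶ D} {g : D ⟶ A}
    {h : A ⟶ X⟦(1 : ℤ)⟧} (hT : Triangle.mk f g h ∈ distTriang C) (hg : IsRightApprox 𝒟 g)
    (hA : A ∈ 𝒟) : h = 0 := by
  obtain ⟨s, hs⟩ := hg.2 hA (𝟙 A)
  have hgh : g ≫ h = 0 := comp_distTriang_mor_zero₂₃ _ hT
  rw [← Category.id_comp h, ← hs, Category.assoc, hgh, comp_zero]

lemma mor₃_eq_zero_of_isLeftApprox {𝒟 : Set C} {B D A : C} {f : B ⟶ D} {g : D ⟶ A}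
    {h : A ⟶ B⟦(1 : ℤ)⟧} (hT : Triangle.mk f g h ∈ distTriang C) (hf : IsLeftApprox 𝒟 f)
    (hB : B ∈ 𝒟) : h = 0 := by
  obtain ⟨r, hr⟩ := hf.2 hB (𝟙 B)
  have hhf : h ≫ f⟦(1 : ℤ)⟧' = 0 := comp_distTriang_mor_zero₃₁ _ hT
  calc h = h ≫ (f ≫ r)⟦(1 : ℤ)⟧' := by rw [hr, CategoryTheory.Functor.map_id, Category.comp_id]
    _ = 0 := by rw [Functor.map_comp, ← Category.assoc, hhf, zero_comp]

lemma subset_backwardMut_forwardMut {𝒟 ℳ : Set C} (hff : StronglyFunctoriallyFinite 𝒟)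
    (hℳ : ℳ ⊆ rightPerpShift 𝒟) : ℳ ⊆ backwardMut 𝒟 (forwardMut 𝒟 ℳ) := by
  intro M hM
  obtain ⟨D, A, f, g, h, hD, hT, hf⟩ := hff.1 M
  have hg := isRightApprox_of_distinguished hT hD (hℳ hM)
  exact Or.inr ⟨D, A, f, g, h, Or.inr ⟨M, D, f, g, h, hM, hD, hT, hf, hg⟩, hD, hT, hf, hg⟩

lemma subset_forwardMut_backwardMut {𝒟 ℳ : Set C} (hff : StronglyFunctoriallyFinite 𝒟)
    (hℳ : ℳ ⊆ leftPerpShift 𝒟) : ℳ ⊆ forwardMut 𝒟 (backwardMut 𝒟 ℳ) := by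
  intro M hM
  obtain ⟨B, D, f, g, h, hD, hT, hg⟩ := hff.2 M
  have hf := isLeftApprox_of_distinguished hT hD (hℳ hM)
  exact Or.inr ⟨B, D, f, g, h, Or.inr ⟨D, M, f, g, h, hM, hD, hT, hf, hg⟩, hD, hT, hf, hg⟩

end

noncomputable def biprodIsoPi (F : WalkingPair → C) : F .left ⊞ F .right ≅ ∏ᶜ F where
  hom := Pi.lift fun j => WalkingPair.casesOn j biprod.fst biprod.snd
  inv := biprod.lift (Pi.π F .left) (Pi.π F .right)
  hom_inv_id := by apply biprod.hom_ext <;> simp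
  inv_hom_id := by
    apply Pi.hom_ext
    rintro (_ | _) <;> simp

lemma biprod_distinguished {X₁ Y₁ Z₁ X₂ Y₂ Z₂ : C}
    {f₁ : X₁ ⟶ Y₁} {g₁ : Y₁ ⟶ Z₁} {h₁ : Z₁ ⟶ X₁⟦(1 : ℤ)⟧}
    {f₂ : X₂ ⟶ Y₂} {g₂ : Y₂ ⟶ Z₂} {h₂ : Z₂ ⟶ X₂⟦(1 : ℤ)⟧}
    (hT₁ : Triangle.mk f₁ g₁ h₁ ∈ distTriang C) (hT₂ : Triangle.mk f₂ g₂ h₂ ∈ distTriang C) :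
    Triangle.mk (biprod.map f₁ f₂) (biprod.map g₁ g₂)
      (biprod.desc (h₁ ≫ (biprod.inl : X₁ ⟶ X₁ ⊞ X₂)⟦(1 : ℤ)⟧')
        (h₂ ≫ (biprod.inr : X₂ ⟶ X₁ ⊞ X₂)⟦(1 : ℤ)⟧')) ∈ distTriang C := by
  let T : WalkingPair → Triangle C := fun j =>
    WalkingPair.casesOn j (Triangle.mk' X₁ Y₁ Z₁ f₁ g₁ h₁) (Triangle.mk' X₂ Y₂ Z₂ f₂ g₂ h₂)
  refine isomorphic_distinguished _
    (productTriangle_distinguished T (by rintro (_ | _) <;> assumption)) _ ?_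
  refine Triangle.isoMk _ _ (biprodIsoPi fun j => (T j).obj₁)
    (biprodIsoPi fun j => (T j).obj₂) (biprodIsoPi fun j => (T j).obj₃) ?_ ?_ ?_
  all_goals dsimp only [Triangle.mk, productTriangle]
  · apply Pi.hom_ext
    rintro (_ | _) <;> simp [biprodIsoPi, T]
  · apply Pi.hom_ext
    rintro (_ | _) <;> simp [biprodIsoPi, T]
  · rw [← Category.assoc, IsIso.eq_comp_inv, Category.assoc]
    apply Pi.hom_ext
    rintro (_ | _) <;>
    · rw [Category.assoc, Category.assoc, piComparison_comp_π]
      apply biprod.hom_ext' <;> simp [biprodIsoPi, T, ← Functor.map_comp]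

lemma biprod_map_id_distinguished {X Y Z : C} {f : X ⟶ Y} {g : Y ⟶ Z} {h : Z ⟶ X⟦(1 : ℤ)⟧}
    (hT : Triangle.mk f g h ∈ distTriang C) (W : C) :
    Triangle.mk (biprod.map f (𝟙 W)) (biprod.fst ≫ g)
      (h ≫ (biprod.inl : X ⟶ X ⊞ W)⟦(1 : ℤ)⟧') ∈ distTriang C := by
  refine isomorphic_distinguished _ (biprod_distinguished hT (contractible_distinguished W)) _ ?_
  refine Triangle.isoMk _ _ (Iso.refl _) (Iso.refl _) (isoBiprodZero (isZero_zero C)) ?_ ?_ ?_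
  all_goals dsimp only [Triangle.mk]
  · simp
  · apply biprod.hom_ext' <;> simp [isoBiprodZero]
  · simp [isoBiprodZero]

/-- Both sides are fibres of `(g, g') : Y ⊞ Y' ⟶ Z`: a unipotent automorphism of `Y ⊞ Y'`
turns `(g, g')` into `(g, 0)`, whose fibre is `X ⊞ Y'`. -/
lemma nonempty_biprod_iso_of_mor₂_factor {X Y Z X' Y' : C} {f : X ⟶ Y} {g : Y ⟶ Z}
    {h : Z ⟶ X⟦(1 : ℤ)⟧} {f' : X' ⟶ Y'} {g' : Y' ⟶ Z} {h' : Z ⟶ X'⟦(1 : ℤ)⟧}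
    (hT : Triangle.mk f g h ∈ distTriang C) (hT' : Triangle.mk f' g' h' ∈ distTriang C)
    (c : Y' ⟶ Y) (hc : c ≫ g = g') (c' : Y ⟶ Y') (hc' : c' ≫ g' = g) :
    Nonempty (X ⊞ Y' ≅ X' ⊞ Y) :=
  nonempty_iso_of_distinguished_of_mor₂ (biprod_map_id_distinguished hT Y')
    (biprod_map_id_distinguished hT' Y)
    ((Biprod.unipotentLower c).symm ≪≫ biprod.braiding Y Y' ≪≫ Biprod.unipotentLower c')
    (by apply biprod.hom_ext' <;> simp [Biprod.ofComponents, hc, hc'])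

lemma nonempty_biprod_iso_of_mor₁_factor {X Y Z Y' Z' : C} {f : X ⟶ Y} {g : Y ⟶ Z}
    {h : Z ⟶ X⟦(1 : ℤ)⟧} {f' : X ⟶ Y'} {g' : Y' ⟶ Z'} {h' : Z' ⟶ X⟦(1 : ℤ)⟧}
    (hT : Triangle.mk f g h ∈ distTriang C) (hT' : Triangle.mk f' g' h' ∈ distTriang C)
    (t : Y ⟶ Y') (ht : f ≫ t = f') (t' : Y' ⟶ Y) (ht' : f' ≫ t' = f) :
    Nonempty (Z ⊞ Y' ≅ Z' ⊞ Y) := by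
  obtain ⟨u, -, hu⟩ := complete_distinguished_triangle_morphism _ _ hT hT' (𝟙 X) t
    (ht.trans (Category.id_comp f').symm)
  obtain ⟨u', -, hu'⟩ := complete_distinguished_triangle_morphism _ _ hT' hT (𝟙 X) t'
    (ht'.trans (Category.id_comp f).symm)
  obtain ⟨e⟩ := nonempty_biprod_iso_of_mor₂_factor (rot_of_distTriang (Triangle.mk f g h) hT)
    (rot_of_distTriang (Triangle.mk f' g' h') hT')
    u' (by simpa [Triangle.mk] using hu'.symm) u (by simpa [Triangle.mk] using hu.symm)
  exact ⟨biprod.braiding Z Y' ≪≫ e.symm ≪≫ biprod.braiding Y Z'⟩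

lemma nonempty_biprod_iso_of_isRightApprox {𝒟 : Set C} {X D A X' D' : C} {f : X ⟶ D}
    {g : D ⟶ A} {h : A ⟶ X⟦(1 : ℤ)⟧} {f' : X' ⟶ D'} {g' : D' ⟶ A} {h' : A ⟶ X'⟦(1 : ℤ)⟧}
    (hT : Triangle.mk f g h ∈ distTriang C) (hT' : Triangle.mk f' g' h' ∈ distTriang C)
    (hg : IsRightApprox 𝒟 g) (hg' : IsRightApprox 𝒟 g') : Nonempty (X ⊞ D' ≅ X' ⊞ D) := by
  obtain ⟨c, hc⟩ := hg.2 hg'.1 g'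
  obtain ⟨c', hc'⟩ := hg'.2 hg.1 g
  exact nonempty_biprod_iso_of_mor₂_factor hT hT' c hc c' hc'

lemma nonempty_biprod_iso_of_isLeftApprox {𝒟 : Set C} {B D A D' A' : C} {f : B ⟶ D}
    {g : D ⟶ A} {h : A ⟶ B⟦(1 : ℤ)⟧} {f' : B ⟶ D'} {g' : D' ⟶ A'} {h' : A' ⟶ B⟦(1 : ℤ)⟧}
    (hT : Triangle.mk f g h ∈ distTriang C) (hT' : Triangle.mk f' g' h' ∈ distTriang C)
    (hf : IsLeftApprox 𝒟 f) (hf' : IsLeftApprox 𝒟 f') : Nonempty (A ⊞ D' ≅ A' ⊞ D) := by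
  obtain ⟨t, ht⟩ := hf.2 hf'.1 f'
  obtain ⟨t', ht'⟩ := hf'.2 hf.1 f
  exact nonempty_biprod_iso_of_mor₁_factor hT hT' t ht t' ht'

namespace IsSubcat

variable {S : Set C} (hS : IsSubcat S)
include hS

omit [HasZeroObject C] [HasShift C ℤ] [∀ n : ℤ, (shiftFunctor C n).Additive]
  [Pretriangulated C] in
lemma mem_of_biprod_iso {P Q R : C} (e : P ⊞ Q ≅ R) (hR : R ∈ S) : P ∈ S :=
  (hS.2.2 (hS.1 e.symm hR)).1

lemma mem_of_distinguished_of_mor₃_eq_zero {X Y Z : C} {f : X ⟶ Y} {g : Y ⟶ Z}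
    {h : Z ⟶ X⟦(1 : ℤ)⟧} (hT : Triangle.mk f g h ∈ distTriang C) (h₀ : h = 0) (hY : Y ∈ S) :
    X ∈ S ∧ Z ∈ S := by
  obtain ⟨e, -⟩ := exists_iso_binaryBiproduct_of_distTriang _ hT h₀
  exact hS.2.2 (hS.1 e hY)

end IsSubcat

lemma backwardMut_forwardMut_subset {𝒟 ℳ : Set C} (hℳ : IsSubcat ℳ) (h𝒟ℳ : 𝒟 ⊆ ℳ) :
    backwardMut 𝒟 (forwardMut 𝒟 ℳ) ⊆ ℳ := by
  rintro B (hB | ⟨D, A, f, g, h, hA, hD, hT, -, hg⟩)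
  · exact h𝒟ℳ hB
  rcases hA with hA | ⟨M, D', f', g', h', hM, -, hT', -, hg'⟩
  · exact (hℳ.mem_of_distinguished_of_mor₃_eq_zero hT
      (mor₃_eq_zero_of_isRightApprox hT hg hA) (h𝒟ℳ hD)).1
  · obtain ⟨e⟩ := nonempty_biprod_iso_of_isRightApprox hT hT' hg hg'
    exact hℳ.mem_of_biprod_iso e (hℳ.2.1 hM (h𝒟ℳ hD))

lemma forwardMut_backwardMut_subset {𝒟 ℳ : Set C} (hℳ : IsSubcat ℳ) (h𝒟ℳ : 𝒟 ⊆ ℳ) :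
    forwardMut 𝒟 (backwardMut 𝒟 ℳ) ⊆ ℳ := by
  rintro A (hA | ⟨B, D, f, g, h, hB, hD, hT, hf, -⟩)
  · exact h𝒟ℳ hA
  rcases hB with hB | ⟨D', M, f', g', h', hM, -, hT', hf', -⟩
  · exact (hℳ.mem_of_distinguished_of_mor₃_eq_zero hT
      (mor₃_eq_zero_of_isLeftApprox hT hf hB) (h𝒟ℳ hD)).2
  · obtain ⟨e⟩ := nonempty_biprod_iso_of_isLeftApprox hT hT' hf hf'
    exact hℳ.mem_of_biprod_iso e (hℳ.2.1 hM (h𝒟ℳ hD))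

theorem mutations_mutually_inverse_general (𝒟 : Set C) (hff : StronglyFunctoriallyFinite 𝒟)
    (hperp : leftPerpShift 𝒟 = rightPerpShift 𝒟) :
    ∀ ℳ : Set C, IsSubcat ℳ → 𝒟 ⊆ ℳ → ℳ ⊆ leftPerpShift 𝒟 →
      backwardMut 𝒟 (forwardMut 𝒟 ℳ) = ℳ ∧ forwardMut 𝒟 (backwardMut 𝒟 ℳ) = ℳ := by
  intro ℳ hℳ h𝒟ℳ hℳ𝒵
  exact ⟨(backwardMut_forwardMut_subset hℳ h𝒟ℳ).antisymm
      (subset_backwardMut_forwardMut hff (hperp ▸ hℳ𝒵)),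
    (forwardMut_backwardMut_subset hℳ h𝒟ℳ).antisymm (subset_forwardMut_backwardMut hff hℳ𝒵)⟩

/-- Proposition 4.12 for `d = 1`: if `𝒟` is a strongly functorially finite rigid subcategory
with `^⊥(Σ𝒟) = (Σ⁻¹𝒟)^⊥ =: 𝒵` and `𝒵` is extension closed, then forward and backward
`𝒟`-mutation are mutually inverse on subcategories `ℳ` with `𝒟 ⊆ ℳ ⊆ 𝒵`. -/
theorem mutations_mutually_inverse (𝒟 : Set C) (hsub : IsSubcat 𝒟) (hrig : IsRigid 𝒟)
    (hff : StronglyFunctoriallyFinite 𝒟)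
    (hperp : leftPerpShift 𝒟 = rightPerpShift 𝒟)
    (hz : ExtClosed (leftPerpShift 𝒟)) :
    ∀ ℳ : Set C, IsSubcat ℳ → 𝒟 ⊆ ℳ → ℳ ⊆ leftPerpShift 𝒟 →
      backwardMut 𝒟 (forwardMut 𝒟 ℳ) = ℳ ∧ forwardMut 𝒟 (backwardMut 𝒟 ℳ) = ℳ :=
  mutations_mutually_inverse_general 𝒟 hff hperp
end
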